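/- arXiv:2105.01450 — 7 statements merged into one kernel-verified Lean document; each statement's English description precedes it below -/
import Mathlib

section
/- For a prime p ≡ 1 (mod 8), if i, r ∈ ℤ/pℤ satisfy i² = -1 and r² = 2, then there exists ζ ∈ (ℤ/pℤ)× of order 8 such that (1+i)(1+r) = (1+ζ)². -/
theorem stmt_0 (p : ℕ) [Fact p.Prime] (hp : p % 8 = 1)
    (i r : ZMod p) (hi : i ^ 2 = -1) (hr : r ^ 2 = 2) :
    ∃ ζ : (ZMod p)ˣ, orderOf ζ = 8 ∧ (1 + i) * (1 + r) = (1 + (ζ : ZMod p)) ^ 2 := by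
  have hp2 : p ≠ 2 := by intro h; rw [h] at hp; norm_num at hp
  have hplt : Fact (2 < p) := ⟨lt_of_le_of_ne (Fact.out : p.Prime).two_le (Ne.symm hp2)⟩
  have h2 : (2 : ZMod p) ≠ 0 := by
    intro h
    have := (ZMod.natCast_eq_zero_iff 2 p).mp (by exact_mod_cast h)
    exact hp2 ((Nat.prime_dvd_prime_iff_eq (Fact.out) Nat.prime_two).mp this)
  set z : ZMod p := r * (1 + i) / 2 with hz
  have hz2 : z ^ 2 = i := by
    rw [hz, div_pow]
    rw [div_eq_iff (pow_ne_zero 2 h2)]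
    linear_combination (1 + i) ^ 2 * hr + 2 * hi
  have hz4 : z ^ 4 = -1 := by
    have : z ^ 4 = (z ^ 2) ^ 2 := by ring
    rw [this, hz2, hi]
  have hz8 : z ^ 8 = 1 := by
    have : z ^ 8 = (z ^ 4) ^ 2 := by ring
    rw [this, hz4]; ring
  have hu : IsUnit z := by
    apply IsUnit.of_mul_eq_one (z ^ 7)
    calc z * z ^ 7 = z ^ 8 := by ring
    _ = 1 := hz8
  refine ⟨hu.unit, ?_, ?_⟩
  · apply orderOf_eq_prime_pow (p := 2) (n := 2)
    · intro h
      have : (hu.unit : ZMod p) ^ (2 ^ 2) = 1 := by rw [← Units.val_pow_eq_pow_val, h, Units.val_one]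
      rw [hu.unit_spec] at this
      norm_num at this
      rw [hz4] at this
      exact CharP.neg_one_ne_one (ZMod p) p this
    · ext
      rw [Units.val_pow_eq_pow_val, hu.unit_spec, Units.val_one]
      norm_num
      exact hz8
  · rw [hu.unit_spec]
    have : (1 + z) ^ 2 = 1 + 2 * z + z ^ 2 := by ring
    rw [this, hz2, hz]
    field_simp
    ring
end

section
/- For a prime p ≡ 1 (mod 8) and j, r ∈ ℤ with j² ≡ -1 (mod p) and r² ≡ 2 (mod p), the Legendre symbol (1+j | p) equals -1 if and only if (1+r | p) equals -1. -/
theorem stmt_1 (p : ℕ) [Fact p.Prime] (hp : p % 8 = 1)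
    (j r : ℤ) (hj : j ^ 2 ≡ -1 [ZMOD (p : ℤ)]) (hr : r ^ 2 ≡ 2 [ZMOD (p : ℤ)]) :
    legendreSym p (1 + j) = -1 ↔ legendreSym p (1 + r) = -1 := by
  have hp2 : p ≠ 2 := by omega
  have hp1 : 1 < p := (Fact.out : p.Prime).one_lt
  -- move congruences to ZMod p
  have hj' : (j : ZMod p) ^ 2 = -1 := by
    have := (ZMod.intCast_eq_intCast_iff _ _ _).mpr hj
    push_cast at this; exact_mod_cast this
  have hr' : (r : ZMod p) ^ 2 = 2 := by
    have := (ZMod.intCast_eq_intCast_iff _ _ _).mpr hr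
    push_cast at this; exact_mod_cast this
  have h2ne : (2 : ZMod p) ≠ 0 := by
    intro h
    have : ((2 : ℕ) : ZMod p) = 0 := by exact_mod_cast h
    have := (ZMod.natCast_eq_zero_iff 2 p).mp this
    have := Nat.le_of_dvd (by norm_num) this
    omega
  have h1ne : (1 : ZMod p) ≠ 0 := one_ne_zero
  have hja : ((1 + j : ℤ) : ZMod p) ≠ 0 := by
    push_cast
    intro h
    have hjv : (j : ZMod p) = -1 := by linear_combination h
    rw [hjv] at hj'
    have : (2 : ZMod p) = 0 := by linear_combination hj'
    exact h2ne this
  have hra : ((1 + r : ℤ) : ZMod p) ≠ 0 := by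
    push_cast
    intro h
    have hrv : (r : ZMod p) = -1 := by linear_combination h
    rw [hrv] at hr'
    have : (1 : ZMod p) = 0 := by linear_combination -hr'
    exact h1ne this
  have hsa : ((1 + j + r : ℤ) : ZMod p) ^ 2
      = 2 * ((1 + j : ℤ) : ZMod p) * ((1 + r : ℤ) : ZMod p) := by
    push_cast
    linear_combination hj' + hr'
  have hsne : ((1 + j + r : ℤ) : ZMod p) ≠ 0 := by
    intro h
    have h0 : (2 : ZMod p) * ((1 + j : ℤ) : ZMod p) * ((1 + r : ℤ) : ZMod p) = 0 := by
      rw [← hsa, h]; ring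
    rcases mul_eq_zero.mp h0 with h' | h'
    · rcases mul_eq_zero.mp h' with h'' | h''
      · exact h2ne h''
      · exact hja h''
    · exact hra h'
  -- Legendre symbol of 2 is 1 since 2 = r^2
  have h2ne' : ((2 : ℤ) : ZMod p) ≠ 0 := by push_cast; exact h2ne
  have h2 : legendreSym p 2 = 1 := by
    rw [legendreSym.eq_one_iff p h2ne']
    exact ⟨(r : ZMod p), by push_cast; rw [← hr']; ring⟩
  -- key identity
  have key : legendreSym p 2 * legendreSym p (1 + j) * legendreSym p (1 + r)
      = legendreSym p (1 + j + r) * legendreSym p (1 + j + r) := by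
    rw [← legendreSym.mul, ← legendreSym.mul, ← legendreSym.mul]
    unfold legendreSym
    congr 1
    push_cast
    linear_combination -hj' - hr'
  have hs1 : legendreSym p (1 + j + r) * legendreSym p (1 + j + r) = 1 := by
    rcases legendreSym.eq_one_or_neg_one p hsne with h | h <;> rw [h] <;> norm_num
  rw [h2, one_mul, hs1] at key
  rcases legendreSym.eq_one_or_neg_one p hja with h1 | h1 <;>
    rcases legendreSym.eq_one_or_neg_one p hra with h3 | h3 <;>
      rw [h1, h3] at key <;> simp [h1, h3] <;> norm_num at key
end

section
/- For a prime p ≡ 1 (mod 8) and j ∈ ℤ with j² ≡ -1 (mod p) and r ∈ ℤ with r² ≡ 2 (mod p), one has (1+j | p) = (-1)^((p-1)/8) · (r | p), where (·|p) is the Legendre symbol. -/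
theorem stmt_2 (p : ℕ) [Fact p.Prime] (hp : p % 8 = 1)
    (j r : ℤ) (hj : j ^ 2 ≡ -1 [ZMOD (p : ℤ)]) (hr : r ^ 2 ≡ 2 [ZMOD (p : ℤ)]) :
    legendreSym p (1 + j) = (-1) ^ ((p - 1) / 8) * legendreSym p r := by
  have hp2 : 2 ≤ p := (Fact.out : p.Prime).two_le
  have hp9 : 9 ≤ p := by omega
  haveI : Fact (2 < p) := ⟨by omega⟩
  have hJ : ((j : ZMod p)) ^ 2 = -1 := by
    have := (ZMod.intCast_eq_intCast_iff (j ^ 2) (-1) p).mpr hj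
    push_cast at this
    exact this
  have hR : ((r : ZMod p)) ^ 2 = 2 := by
    have := (ZMod.intCast_eq_intCast_iff (r ^ 2) 2 p).mpr hr
    push_cast at this
    exact this
  have h1j : ((1 + j : ℤ) : ZMod p) ≠ 0 := by
    intro h
    push_cast at h
    have hj1 : (j : ZMod p) = -1 := by linear_combination h
    rw [hj1] at hJ
    have hcon : (-1 : ZMod p) = 1 := by linear_combination -hJ
    exact ZMod.neg_one_ne_one hcon
  have hrne : ((r : ℤ) : ZMod p) ≠ 0 := by
    intro h
    rw [h] at hR
    have h2 : ((2 : ℕ) : ZMod p) = 0 := by push_cast; linear_combination -hR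
    have := (ZMod.natCast_eq_zero_iff 2 p).mp h2
    have := Nat.le_of_dvd (by norm_num) this
    omega
  have e1 : p / 2 = 2 * (p / 4) := by omega
  have e2 : p / 4 = 2 * (p / 8) := by omega
  have e3 : (p - 1) / 8 = p / 8 := by omega
  have key : (legendreSym p (1 + j) : ZMod p)
      = ((-1) ^ (p / 8) : ℤ) * (legendreSym p r : ZMod p) := by
    rw [legendreSym.eq_pow, legendreSym.eq_pow]
    push_cast
    rw [e1, pow_mul, pow_mul]
    have hsq : ((1 : ZMod p) + (j : ZMod p)) ^ 2 = 2 * (j : ZMod p) := by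
      linear_combination hJ
    rw [hsq, hR, mul_pow, e2, pow_mul, pow_mul, hJ]
    ring
  have hL := legendreSym.eq_one_or_neg_one p (a := 1 + j) h1j
  have hRR := legendreSym.eq_one_or_neg_one p (a := r) hrne
  have hS : ((-1 : ℤ)) ^ (p / 8) = 1 ∨ ((-1 : ℤ)) ^ (p / 8) = -1 := by
    rcases Nat.even_or_odd (p / 8) with h | h
    · exact Or.inl (Even.neg_one_pow h)
    · exact Or.inr (Odd.neg_one_pow h)
  rw [e3]
  have cast_eq : ((legendreSym p (1 + j) : ℤ) : ZMod p)
      = (((-1) ^ (p / 8) * legendreSym p r : ℤ) : ZMod p) := by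
    push_cast
    push_cast at key
    exact key
  rcases hL with h1 | h1 <;> rcases hS with h2 | h2 <;> rcases hRR with h3 | h3 <;>
      rw [h1, h2, h3] at cast_eq ⊢ <;> push_cast at cast_eq <;>
      norm_num at cast_eq ⊢ <;>
    first
      | rfl
      | exact absurd cast_eq.symm (ZMod.neg_one_ne_one (n := p))
      | exact absurd cast_eq (ZMod.neg_one_ne_one (n := p))
end

section
/- Let p ≡ 1 (mod 8) be prime and write p = a² + b² with a, b ∈ ℤ and a odd. Then the Legendre symbol (a | p) equals 1. -/
theorem stmt_3 (p : ℕ) [Fact p.Prime] (hp : p % 8 = 1)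
    (a b : ℤ) (hab : (p : ℤ) = a ^ 2 + b ^ 2) (ha : Odd a) :
    legendreSym p a = 1 := by
  have hpp : p.Prime := Fact.out
  have hp4 : p % 4 = 1 := by omega
  set A : ℕ := a.natAbs with hA
  have hAodd : Odd A := Int.natAbs_odd.mpr ha
  have hAa : ((A : ℤ)) ∣ a := Int.natAbs_dvd.mpr dvd_rfl
  have hgcd : Int.gcd b (A : ℤ) = 1 := by
    by_contra h
    obtain ⟨q, hq, hqd⟩ := Nat.exists_prime_and_dvd h
    have hqZ : (q : ℤ) ∣ Int.gcd b (A : ℤ) := Int.natCast_dvd_natCast.mpr hqd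
    have hqb : (q : ℤ) ∣ b := hqZ.trans (Int.gcd_dvd_left _ _)
    have hqa : (q : ℤ) ∣ a := (hqZ.trans (Int.gcd_dvd_right _ _)).trans hAa
    have hq2 : (q : ℤ) ^ 2 ∣ (p : ℤ) := by
      rw [hab]; exact dvd_add (pow_dvd_pow_of_dvd hqa 2) (pow_dvd_pow_of_dvd hqb 2)
    have hq2' : q ^ 2 ∣ p := by exact_mod_cast hq2
    have hqp : q ∣ p := (dvd_pow_self q two_ne_zero).trans hq2'
    have := (Nat.prime_dvd_prime_iff_eq hq hpp).mp hqp
    subst this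
    have h1 : q ^ 2 ≤ q := Nat.le_of_dvd hpp.pos hq2'
    nlinarith [hq.two_le]
  have hJa : legendreSym p a = jacobiSym a p := jacobiSym.legendreSym.to_jacobiSym p a
  have hpodd : Odd p := hpp.odd_of_ne_two (by omega)
  have hχ : ZMod.χ₄ p = 1 := ZMod.χ₄_nat_one_mod_four hp4
  have hsign : jacobiSym a p = jacobiSym (A : ℤ) p := by
    rcases Int.natAbs_eq a with h | h
    · rw [h]
    · rw [h, jacobiSym.neg _ hpodd, hχ, one_mul]
  have hqr : jacobiSym (A : ℤ) p = jacobiSym (p : ℤ) A :=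
    jacobiSym.quadratic_reciprocity_one_mod_four' hAodd hp4
  have hmod : jacobiSym (p : ℤ) A = jacobiSym (b ^ 2) A := by
    apply jacobiSym.mod_left'
    have hd : (A : ℤ) ∣ b ^ 2 - (p : ℤ) := by
      rw [hab]
      have : (A : ℤ) ∣ a ^ 2 := hAa.trans (dvd_pow_self a two_ne_zero)
      have h2 : b ^ 2 - (a ^ 2 + b ^ 2) = -(a ^ 2) := by ring
      rw [h2]; exact this.neg_right
    exact (Int.modEq_iff_dvd.mpr hd : Int.ModEq _ _ _)
  rw [hJa, hsign, hqr, hmod, jacobiSym.sq_one' hgcd]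
end

section
/- Let p ≡ 1 (mod 8) be prime with p = a² + b², a odd. Then the Legendre symbol (a+b | p) equals (-1)^(((a+b)²-1)/8). In particular, (a+b | p) = -1 if and only if (a+b)² ≡ 9 (mod 16). -/
open ZMod

lemma aux5 (s : ℤ) (hs : Odd s) :
    (ZMod.χ₈ (s : ZMod 8) : ℤ) = (-1) ^ ((s ^ 2 - 1) / 8).toNat ∧
      ((ZMod.χ₈ (s : ZMod 8) : ℤ) = -1 ↔ s ^ 2 % 16 = 9) := by
  have hs0 : s ≠ 0 := by rintro rfl; simp [Int.odd_iff] at hs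
  have h1 : 1 ≤ s ^ 2 := by
    have := sq_nonneg s
    have : s ^ 2 ≠ 0 := pow_ne_zero _ hs0
    omega
  have hsq : s ^ 2 % 16 = (s % 16) ^ 2 % 16 := by
    have h : Int.ModEq 16 (s % 16) s := Int.emod_emod_of_dvd s dvd_rfl
    exact (h.pow 2).symm
  have h8 : s % 8 = 1 ∨ s % 8 = 3 ∨ s % 8 = 5 ∨ s % 8 = 7 := by
    rw [Int.odd_iff] at hs; omega
  have hchi : (s : ZMod 8) = ((s % 8 : ℤ) : ZMod 8) :=
    (ZMod.intCast_eq_intCast_iff _ _ _).mpr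
      (Int.emod_emod_of_dvd s dvd_rfl : Int.ModEq 8 (s % 8) s).symm
  rcases h8 with h | h | h | h <;> rw [hchi, h]
  · have hs16 : s ^ 2 % 16 = 1 := by
      have h16 : s % 16 = 1 ∨ s % 16 = 9 := by omega
      rcases h16 with h' | h' <;> rw [hsq, h'] <;> norm_num
    have hv : (ZMod.χ₈ ((1 : ℤ) : ZMod 8) : ℤ) = 1 := by decide
    rw [hv]
    generalize s ^ 2 = t at h1 hs16 ⊢
    constructor
    · exact (Even.neg_one_pow (Nat.even_iff.mpr (by omega))).symm
    · constructor <;> intro h' <;> omega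
  · have hs16 : s ^ 2 % 16 = 9 := by
      have h16 : s % 16 = 3 ∨ s % 16 = 11 := by omega
      rcases h16 with h' | h' <;> rw [hsq, h'] <;> norm_num
    have hv : (ZMod.χ₈ ((3 : ℤ) : ZMod 8) : ℤ) = -1 := by decide
    rw [hv]
    generalize s ^ 2 = t at h1 hs16 ⊢
    constructor
    · exact (Odd.neg_one_pow (Nat.odd_iff.mpr (by omega))).symm
    · simp [hs16]
  · have hs16 : s ^ 2 % 16 = 9 := by
      have h16 : s % 16 = 5 ∨ s % 16 = 13 := by omega
      rcases h16 with h' | h' <;> rw [hsq, h'] <;> norm_num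
    have hv : (ZMod.χ₈ ((5 : ℤ) : ZMod 8) : ℤ) = -1 := by decide
    rw [hv]
    generalize s ^ 2 = t at h1 hs16 ⊢
    constructor
    · exact (Odd.neg_one_pow (Nat.odd_iff.mpr (by omega))).symm
    · simp [hs16]
  · have hs16 : s ^ 2 % 16 = 1 := by
      have h16 : s % 16 = 7 ∨ s % 16 = 15 := by omega
      rcases h16 with h' | h' <;> rw [hsq, h'] <;> norm_num
    have hv : (ZMod.χ₈ ((7 : ℤ) : ZMod 8) : ℤ) = 1 := by decide
    rw [hv]
    generalize s ^ 2 = t at h1 hs16 ⊢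
    constructor
    · exact (Even.neg_one_pow (Nat.even_iff.mpr (by omega))).symm
    · constructor <;> intro h' <;> omega

theorem stmt_5 (p : ℕ) [Fact p.Prime] (hp : p % 8 = 1)
    (a b : ℤ) (hab : (p : ℤ) = a ^ 2 + b ^ 2) (ha : Odd a) :
    legendreSym p (a + b) = (-1) ^ (((a + b) ^ 2 - 1) / 8).toNat ∧
      (legendreSym p (a + b) = -1 ↔ (a + b) ^ 2 ≡ 9 [ZMOD 16]) := by
  have hpp : p.Prime := Fact.out
  have hp2 : Odd p := by rw [Nat.odd_iff]; omega
  have hp4 : p % 4 = 1 := by omega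
  -- b is even, s := a + b is odd
  have hb : Even b := by
    have hpo : Odd ((p : ℤ)) := by exact_mod_cast hp2
    rcases Int.even_or_odd b with h | h
    · exact h
    · exfalso
      have heven : Even (a ^ 2 + b ^ 2) := (ha.pow).add_odd (h.pow)
      rw [← hab] at heven
      rw [Int.even_iff] at heven
      rw [Int.odd_iff] at hpo
      omega
  have hs : Odd (a + b) := ha.add_even hb
  set s := a + b with hs_def
  set n := s.natAbs with hn_def
  have hn : Odd n := Int.natAbs_odd.mpr hs
  -- gcd a b = 1
  have hgcd : Int.gcd a b = 1 := by
    by_contra hg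
    have h1 : (Int.gcd a b : ℤ) ∣ a := Int.gcd_dvd_left a b
    have h2 : (Int.gcd a b : ℤ) ∣ b := Int.gcd_dvd_right a b
    have hd : ((Int.gcd a b : ℤ))^2 ∣ (p : ℤ) := by
      rw [hab]; exact dvd_add (pow_dvd_pow_of_dvd h1 2) (pow_dvd_pow_of_dvd h2 2)
    have hdn : (Int.gcd a b)^2 ∣ p := by exact_mod_cast hd
    have hg0 : Int.gcd a b ≠ 0 := by
      intro h0
      have := Int.gcd_eq_zero_iff.mp h0
      rw [this.1, this.2] at hab; simp at hab
      exact hpp.ne_zero (by exact_mod_cast hab)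
    set g := Int.gcd a b
    have : g ∣ p := dvd_trans (dvd_pow_self g (by norm_num)) hdn
    rcases (Nat.Prime.eq_one_or_self_of_dvd hpp g this) with h' | h'
    · exact hg h'
    · rw [h'] at hdn
      have := Nat.le_of_dvd hpp.pos hdn
      nlinarith [hpp.two_le]
  -- gcd a n = 1
  have hgan : Int.gcd a (n : ℤ) = 1 := by
    have hco : IsCoprime a b := Int.isCoprime_iff_gcd_eq_one.mpr hgcd
    have hco2 : IsCoprime a s := by
      have h0 := hco.add_mul_right_right 1
      rw [one_mul, add_comm] at h0
      exact hs_def ▸ h0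
    have h' : Int.gcd a (n : ℤ) = Int.gcd a s := by
      simp [Int.gcd, hn_def, Int.natAbs_abs]
    rw [h']
    exact Int.isCoprime_iff_gcd_eq_one.mp hco2
  -- the jacobi symbol chain
  have key : legendreSym p s = (ZMod.χ₈ (s : ZMod 8) : ℤ) := by
    rw [jacobiSym.legendreSym.to_jacobiSym]
    have step1 : jacobiSym s p = jacobiSym (n : ℤ) p := by
      rcases Int.natAbs_eq s with h | h
      · rw [← h]
      · rw [h, ← neg_one_mul, jacobiSym.mul_left, jacobiSym.at_neg_one hp2,
          ZMod.χ₄_nat_one_mod_four hp4, one_mul]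
    have step2 : jacobiSym (n : ℤ) p = jacobiSym (p : ℤ) n :=
      (jacobiSym.quadratic_reciprocity_one_mod_four hp4 hn).symm
    have step3 : jacobiSym (p : ℤ) n = jacobiSym (2 * a ^ 2) n := by
      apply jacobiSym.mod_left'
      have hdvd : (n : ℤ) ∣ (2 * a ^ 2 - p) := by
        have h1 : (n : ℤ) ∣ s := Int.natAbs_dvd.mpr dvd_rfl
        have h2 : s ∣ (2 * a ^ 2 - p) := ⟨a - b, by rw [hab]; ring⟩
        exact dvd_trans h1 h2
      exact (Int.modEq_iff_dvd.mpr hdvd : Int.ModEq (n : ℤ) (p : ℤ) (2 * a ^ 2))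
    have step4 : jacobiSym (2 * a ^ 2) n = (ZMod.χ₈ (n : ZMod 8) : ℤ) := by
      rw [jacobiSym.mul_left, jacobiSym.sq_one' hgan, mul_one, jacobiSym.at_two hn]
    have step5 : (ZMod.χ₈ ((n : ℤ) : ZMod 8) : ℤ) = (ZMod.χ₈ (s : ZMod 8) : ℤ) := by
      have hneg : ∀ x : ZMod 8, ZMod.χ₈ (-x) = ZMod.χ₈ x := by decide
      rcases Int.natAbs_eq s with h | h
      · rw [← h]
      · have hcast : ((s : ℤ) : ZMod 8) = -(((n : ℕ) : ℤ) : ZMod 8) := by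
          rw [show s = -((n : ℕ) : ℤ) from h, Int.cast_neg]
        rw [hcast, hneg]
    rw [step1, step2, step3, step4, ← step5]
    norm_cast
  obtain ⟨k1, k2⟩ := aux5 s hs
  rw [key, k1, ← k1]
  refine ⟨rfl, ?_⟩
  rw [k2]
  constructor
  · intro h'
    show s ^ 2 % 16 = 9 % 16
    omega
  · intro h'
    have h'' : s ^ 2 % 16 = 9 % 16 := h'
    omega
end

section
/- Every integer n ∈ f(ℤ) with n ≠ 1, where f(x) = 8x⁴ + 16x³ + 12x² + 4x + 1, is a congruent number, i.e., there exist positive rationals a, b, c with a² + b² = c² and a·b/2 = n. -/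
theorem stmt_14 (n : ℤ) (k : ℤ)
    (hn : n = 8 * k ^ 4 + 16 * k ^ 3 + 12 * k ^ 2 + 4 * k + 1) (h1 : n ≠ 1) :
    ∃ a b c : ℚ, 0 < a ∧ 0 < b ∧ 0 < c ∧ a ^ 2 + b ^ 2 = c ^ 2 ∧ a * b / 2 = (n : ℚ) := by
  have hk0 : k ≠ 0 := by rintro rfl; simp at hn; omega
  have hk1 : k ≠ -1 := by rintro rfl; norm_num at hn; omega
  set t : ℚ := |2 * (k : ℚ) + 1| with ht
  have ht2 : t ^ 2 = (2 * (k : ℚ) + 1) ^ 2 := sq_abs _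
  have ht9 : (9 : ℚ) ≤ t ^ 2 := by
    rw [ht2]
    have h9 : (9 : ℤ) ≤ (2 * k + 1) ^ 2 := by rcases (by omega : k ≥ 1 ∨ k ≤ -2) with h | h <;> nlinarith
    calc (9 : ℚ) ≤ ((2 * k + 1 : ℤ) : ℚ) ^ 2 := by exact_mod_cast h9
    _ = (2 * (k : ℚ) + 1) ^ 2 := by push_cast; ring
  have htpos : 0 < t := by nlinarith [abs_nonneg (2 * (k : ℚ) + 1)]
  have ht4 : (1 : ℚ) < t ^ 4 := by nlinarith
  have hd : 0 < t ^ 4 - 1 := by linarith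
  have hn2 : 2 * (n : ℚ) = t ^ 4 + 1 := by
    have : t ^ 4 = (2 * (k : ℚ) + 1) ^ 4 := by
      have : t ^ 4 = (t ^ 2) ^ 2 := by ring
      rw [this, ht2]; ring
    rw [this, hn]; push_cast; ring
  refine ⟨2 * t * (t ^ 4 + 1) / (t ^ 4 - 1), (t ^ 4 - 1) / (2 * t),
    (t ^ 8 + 6 * t ^ 4 + 1) / (2 * t * (t ^ 4 - 1)), ?_, ?_, ?_, ?_, ?_⟩
  · positivity
  · positivity
  · positivity
  · field_simp
    ring
  · rw [div_eq_iff (by norm_num : (2:ℚ) ≠ 0)]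
    field_simp
    nlinarith [hn2]
end

section
/- A positive integer n is a congruent number if and only if the elliptic curve y² = x³ - n²x has a rational point (a, b) with b ≠ 0. -/
theorem stmt_18 (n : ℕ) (hn : 0 < n) :
    (∃ a b c : ℚ, a ≠ 0 ∧ b ≠ 0 ∧ c ≠ 0 ∧ a ^ 2 + b ^ 2 = c ^ 2 ∧ a * b / 2 = (n : ℚ)) ↔
      ∃ a b : ℚ, b ^ 2 = a ^ 3 - (n : ℚ) ^ 2 * a ∧ b ≠ 0 := by
  have hn' : (n : ℚ) ≠ 0 := by exact_mod_cast hn.ne'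
  constructor
  · rintro ⟨a, b, c, ha, hb, hc, hpyth, harea⟩
    have hab : a * b = 2 * n := by field_simp at harea; linarith
    have hca : c - a ≠ 0 := by
      intro h
      apply hb
      have : b ^ 2 = 0 := by linear_combination hpyth + (c + a) * h
      exact pow_eq_zero_iff (by norm_num) |>.mp this
    refine ⟨n * b / (c - a), 2 * n ^ 2 / (c - a), ?_, ?_⟩
    · field_simp
      linear_combination (-2 * (c - a)) * hab + (-b) * hpyth
    · exact div_ne_zero (by positivity) hca
  · rintro ⟨x, y, heq, hy⟩
    have hy2 : y ^ 2 ≠ 0 := pow_ne_zero 2 hy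
    have hprod : x * (x - n) * (x + n) ≠ 0 := by
      intro h
      apply hy2
      rw [heq]; linear_combination h
    have hx : x ≠ 0 := by intro h; exact hprod (by rw [h]; ring)
    have hxn : x - n ≠ 0 := fun h => hprod (by rw [h]; ring)
    have hxn' : x + n ≠ 0 := fun h => hprod (by rw [h]; ring)
    refine ⟨(x ^ 2 - n ^ 2) / y, 2 * n * x / y, (x ^ 2 + n ^ 2) / y, ?_, ?_, ?_, ?_, ?_⟩
    · apply div_ne_zero _ hy
      intro h
      exact hprod (by linear_combination x * h)
    · exact div_ne_zero (by positivity) hy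
    · apply div_ne_zero _ hy
      positivity
    · field_simp
      ring
    · field_simp
      linear_combination (-1) * heq
end
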